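/- Let X be an infinite-dimensional complex Hilbert space, let p, q ∈ [1,∞] be conjugate exponents, let C ∈ B^p(X), T ∈ B^q(X), and let (C_n) in B^p(X) and (T_n) in B^q(X) be sequences with ‖C − C_n‖_p → 0 and ‖T − T_n‖_q → 0. Then the closures of the C_n-numerical ranges W_{C_n}(T_n) converge to the closure of W_C(T) in the Hausdorff metric on compact subsets of ℂ. -/

import Mathlib

open scoped ComplexInnerProductSpace ENNReal
open Filter

noncomputable section

universe u v

noncomputable def sv {X : Type u} {Y : Type v} [NormedAddCommGroup X] [InnerProductSpace ℂ X]
    [NormedAddCommGroup Y] [InnerProductSpace ℂ Y] (C : X →L[ℂ] Y) (n : ℕ) : ℝ :=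
  ⨅ F : {F : X →L[ℂ] Y // Module.rank ℂ (LinearMap.range (F : X →ₗ[ℂ] Y)) ≤ n},
    ‖C - (F : X →L[ℂ] Y)‖

def MemSchatten {X : Type u} {Y : Type v} [NormedAddCommGroup X] [InnerProductSpace ℂ X]
    [NormedAddCommGroup Y] [InnerProductSpace ℂ Y] (p : ℝ≥0∞) (C : X →L[ℂ] Y) : Prop :=
  IsCompactOperator C ∧ (p ≠ ∞ → Summable (fun n => sv C n ^ p.toReal))

noncomputable def schattenNorm {X : Type u} {Y : Type v} [NormedAddCommGroup X]
    [InnerProductSpace ℂ X] [NormedAddCommGroup Y] [InnerProductSpace ℂ Y]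
    (p : ℝ≥0∞) (C : X →L[ℂ] Y) : ℝ :=
  if p = ∞ then ‖C‖ else (∑' n, sv C n ^ p.toReal) ^ (1 / p.toReal)

def IsTraceOf {Y : Type v} [NormedAddCommGroup Y] [InnerProductSpace ℂ Y] [CompleteSpace Y]
    (A : Y →L[ℂ] Y) (z : ℂ) : Prop :=
  ∀ (ι : Type v) (b : HilbertBasis ι ℂ Y), HasSum (fun i => ⟪b i, A (b i)⟫) z

/-! Approximation numbers satisfy `s_{m+n}(A B) ≤ s_m(A) s_n(B)` and are unitarily invariant, so by
Hölder's inequality `∑ₘ s_m(A U* B U) ≤ 2 ‖A‖_p ‖B‖_q`. An operator with summable approximation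
numbers has a trace, the same in every Hilbert basis, bounded by a multiple of that sum: telescoping
its dyadic finite-rank approximants (of ranks `≤ 2 ^ k`) gives a nuclear representation, whose
weights are summable by Cauchy condensation. Hence `(A, B) ↦ tr (A U* B U)` is a bounded bilinear
form uniformly in `U`, and expanding `C_n U* T_n U` around `C U* T U` moves every point of the
numerical range by `O(‖C - C_n‖_p ‖T‖_q + ‖C‖_p ‖T - T_n‖_q + ‖C - C_n‖_p ‖T - T_n‖_q)`. -/

lemma Real.add_rpow_le_two_rpow_mul_rpow_add_rpow {x y t : ℝ} (hx : 0 ≤ x) (hy : 0 ≤ y)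
    (ht : 0 ≤ t) : (x + y) ^ t ≤ 2 ^ t * (x ^ t + y ^ t) := by
  have hmax : 0 ≤ max x y := hx.trans (le_max_left x y)
  calc (x + y) ^ t ≤ (2 * max x y) ^ t := by
        gcongr
        linarith [le_max_left x y, le_max_right x y]
    _ = 2 ^ t * max x y ^ t := Real.mul_rpow zero_le_two hmax
    _ ≤ 2 ^ t * (x ^ t + y ^ t) := by
        gcongr
        rcases max_cases x y with ⟨h, -⟩ | ⟨h, -⟩ <;> rw [h]
        · exact le_add_of_nonneg_right (Real.rpow_nonneg hy t)
        · exact le_add_of_nonneg_left (Real.rpow_nonneg hx t)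

lemma HasSum.comp_div_two {M : Type*} [AddCommMonoid M] [TopologicalSpace M] [ContinuousAdd M]
    {g : ℕ → M} {a : M} (h : HasSum g a) : HasSum (fun m => g (m / 2)) (a + a) :=
  HasSum.even_add_odd (by simpa using h) (by simpa [Nat.mul_add_div] using h)

lemma summable_and_tsum_condensed_le {f : ℕ → ℝ} (h0 : ∀ n, 0 ≤ f n) (hf : Antitone f)
    (hs : Summable f) :
    Summable (fun k => 2 ^ k * f (2 ^ k)) ∧ ∑' k, 2 ^ k * f (2 ^ k) ≤ f 1 + 2 * ∑' n, f n := by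
  refine ⟨(summable_condensed_iff_of_nonneg h0 fun _ _ _ h => hf h).mpr hs,
    Real.tsum_le_of_sum_range_le (fun k => by positivity [h0 (2 ^ k)]) fun n => ?_⟩
  calc ∑ k ∈ Finset.range n, 2 ^ k * f (2 ^ k)
      ≤ ∑ k ∈ Finset.range (n + 1), 2 ^ k * f (2 ^ k) :=
        Finset.sum_le_sum_of_subset_of_nonneg (by simp) fun k _ _ => by positivity [h0 (2 ^ k)]
    _ ≤ f 1 + 2 * ∑ k ∈ Finset.Ico 2 (2 ^ n + 1), f k := by
        simpa [nsmul_eq_mul] using Finset.sum_condensed_le (fun _ _ _ h => hf h) n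
    _ ≤ f 1 + 2 * ∑' n, f n := by gcongr; exact hs.sum_le_tsum _ fun k _ => h0 k

lemma hasSum_sigma_of_tendsto_sum {E : Type*} [NormedAddCommGroup E] [CompleteSpace E]
    {κ : ℕ → Type*} {f : (Σ j, κ j) → E} {g : ℕ → E} {a : E} (hf : Summable fun k => ‖f k‖)
    (hfib : ∀ j, HasSum (fun i => f ⟨j, i⟩) (g j))
    (hg : Tendsto (fun n => ∑ j ∈ Finset.range n, g j) atTop (nhds a)) : HasSum f a := by
  obtain ⟨s, hs⟩ := hf.of_norm
  rwa [tendsto_nhds_unique (hs.sigma hfib).tendsto_sum_nat hg] at hs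

section ApproximationNumbers

variable {X Y Z : Type*} [NormedAddCommGroup X] [InnerProductSpace ℂ X]
  [NormedAddCommGroup Y] [InnerProductSpace ℂ Y] [NormedAddCommGroup Z] [InnerProductSpace ℂ Z]

instance (n : ℕ) : Nonempty {F : X →L[ℂ] Y // LinearMap.rank (F : X →ₗ[ℂ] Y) ≤ n} :=
  ⟨⟨0, by simp⟩⟩

lemma sv_nonneg (C : X →L[ℂ] Y) (n : ℕ) : 0 ≤ sv C n :=
  le_ciInf fun F => norm_nonneg (C - F.1)

lemma sv_le_norm_sub (C : X →L[ℂ] Y) {F : X →L[ℂ] Y} {n : ℕ}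
    (hF : LinearMap.rank (F : X →ₗ[ℂ] Y) ≤ n) : sv C n ≤ ‖C - F‖ := by
  refine ciInf_le (f := fun G : {G : X →L[ℂ] Y // LinearMap.rank (G : X →ₗ[ℂ] Y) ≤ n} =>
    ‖C - G.1‖) ⟨0, ?_⟩ ⟨F, hF⟩
  rintro _ ⟨G, rfl⟩
  exact norm_nonneg _

lemma exists_norm_sub_lt_sv_add (C : X →L[ℂ] Y) (n : ℕ) {ε : ℝ} (hε : 0 < ε) :
    ∃ F : X →L[ℂ] Y, LinearMap.rank (F : X →ₗ[ℂ] Y) ≤ n ∧ ‖C - F‖ < sv C n + ε := by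
  obtain ⟨⟨F, hF⟩, h⟩ := exists_lt_of_ciInf_lt (lt_add_of_pos_right (sv C n) hε)
  exact ⟨F, hF, h⟩

lemma sv_antitone (C : X →L[ℂ] Y) : Antitone (sv C) := fun _ _ hmn =>
  le_ciInf fun F => sv_le_norm_sub C (F.2.trans (by exact_mod_cast hmn))

lemma sv_zero (C : X →L[ℂ] Y) : sv C 0 = ‖C‖ := by
  refine le_antisymm (by simpa using sv_le_norm_sub C (F := 0) (by simp)) (le_ciInf fun F => ?_)
  have hF : (F : X →L[ℂ] Y) = 0 := by
    have hrange : LinearMap.range (F : X →ₗ[ℂ] Y) = ⊥ :=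
      Submodule.rank_eq_zero.mp (le_antisymm (by simpa using F.2) zero_le)
    ext x
    simpa [hrange] using LinearMap.mem_range_self (F : X →ₗ[ℂ] Y) x
  rw [hF, sub_zero]

lemma sv_le_norm (C : X →L[ℂ] Y) (n : ℕ) : sv C n ≤ ‖C‖ :=
  sv_zero C ▸ sv_antitone C (Nat.zero_le n)

lemma rank_toLinearMap_sub_le (F G : X →L[ℂ] Y) :
    LinearMap.rank ((F - G : X →L[ℂ] Y) : X →ₗ[ℂ] Y) ≤
      LinearMap.rank (F : X →ₗ[ℂ] Y) + LinearMap.rank (G : X →ₗ[ℂ] Y) := by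
  have hneg : LinearMap.rank (-(G : X →ₗ[ℂ] Y)) = LinearMap.rank (G : X →ₗ[ℂ] Y) := by
    rw [LinearMap.rank, LinearMap.range_neg, LinearMap.rank]
  simpa [sub_eq_add_neg, hneg] using LinearMap.rank_add_le (F : X →ₗ[ℂ] Y) (-(G : X →ₗ[ℂ] Y))

lemma sv_sub_le (A B : X →L[ℂ] Y) (m n : ℕ) : sv (A - B) (m + n) ≤ sv A m + sv B n :=
  le_ciInf_add_ciInf fun F G => by
    calc sv (A - B) (m + n) ≤ ‖A - B - (F - G : X →L[ℂ] Y)‖ :=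
          sv_le_norm_sub _ ((rank_toLinearMap_sub_le _ _).trans
            (by push_cast; exact add_le_add F.2 G.2))
      _ = ‖(A - F) - (B - G)‖ := by abel_nf
      _ ≤ ‖A - F‖ + ‖B - G‖ := norm_sub_le _ _

lemma rank_comp_le_of_rank_le_right {g : X →ₗ[ℂ] Y} {n : ℕ} (hg : LinearMap.rank g ≤ n)
    (f : Y →ₗ[ℂ] Z) : LinearMap.rank (f.comp g) ≤ n :=
  Cardinal.lift_le_nat_iff.mp
    ((LinearMap.lift_rank_comp_le_right g f).trans (Cardinal.lift_le_nat_iff.mpr hg))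

/-- The rank `m + n` competitor is `F B + (A - F) G`, whose distance to `A B` is
`(A - F)(B - G)`. -/
lemma sv_comp_le (A : Y →L[ℂ] Z) (B : X →L[ℂ] Y) (m n : ℕ) :
    sv (A.comp B) (m + n) ≤ sv A m * sv B n := by
  rw [sv.eq_1 A, Real.iInf_mul_of_nonneg (sv_nonneg B n)]
  refine le_ciInf fun F => ?_
  rw [sv.eq_1 B, Real.mul_iInf_of_nonneg (norm_nonneg _)]
  refine le_ciInf fun G => ?_
  have hrank : LinearMap.rank ((F.1.comp B + (A - F.1).comp G.1 : X →L[ℂ] Z) :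
      X →ₗ[ℂ] Z) ≤ (m + n : ℕ) := by
    rw [ContinuousLinearMap.toLinearMap_add, ContinuousLinearMap.toLinearMap_comp,
      ContinuousLinearMap.toLinearMap_comp]
    refine (LinearMap.rank_add_le _ _).trans ?_
    push_cast
    exact add_le_add ((LinearMap.rank_comp_le_left _ _).trans F.2)
      (rank_comp_le_of_rank_le_right G.2 _)
  calc sv (A.comp B) (m + n) ≤ ‖A.comp B - (F.1.comp B + (A - F.1).comp G.1)‖ :=
        sv_le_norm_sub _ hrank
    _ = ‖(A - F.1).comp (B - G.1)‖ := by
        congr 1; ext x; simp only [ContinuousLinearMap.comp_apply, sub_apply,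
          add_apply, map_sub]; abel
    _ ≤ ‖A - F.1‖ * ‖B - G.1‖ := ContinuousLinearMap.opNorm_comp_le _ _

lemma sv_comp_le_mul_norm (A : Y →L[ℂ] Z) (B : X →L[ℂ] Y) (n : ℕ) :
    sv (A.comp B) n ≤ sv A n * ‖B‖ := by
  simpa [sv_zero] using sv_comp_le A B n 0

lemma sv_comp_le_norm_mul (A : Y →L[ℂ] Z) (B : X →L[ℂ] Y) (n : ℕ) :
    sv (A.comp B) n ≤ ‖A‖ * sv B n := by
  simpa [sv_zero] using sv_comp_le A B 0 n

end ApproximationNumbers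

section Schatten

variable {X Y Z : Type*} [NormedAddCommGroup X] [InnerProductSpace ℂ X]
  [NormedAddCommGroup Y] [InnerProductSpace ℂ Y] [NormedAddCommGroup Z] [InnerProductSpace ℂ Z]

lemma MemSchatten.sub {p : ℝ≥0∞} {A B : X →L[ℂ] Y} (hA : MemSchatten p A)
    (hB : MemSchatten p B) : MemSchatten p (A - B) := by
  refine ⟨hA.1.sub hB.1, fun hp => ?_⟩
  set t := p.toReal
  have hbound (m : ℕ) : sv (A - B) m ^ t ≤ 2 ^ t * (sv A (m / 2) ^ t + sv B (m / 2) ^ t) := by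
    have hsv : sv (A - B) m ≤ sv A (m / 2) + sv B (m / 2) :=
      (sv_antitone _ (by omega)).trans (sv_sub_le A B (m / 2) (m / 2))
    calc sv (A - B) m ^ t ≤ (sv A (m / 2) + sv B (m / 2)) ^ t := by
          gcongr; exact sv_nonneg _ _
      _ ≤ _ := Real.add_rpow_le_two_rpow_mul_rpow_add_rpow (sv_nonneg _ _) (sv_nonneg _ _)
          ENNReal.toReal_nonneg
  exact Summable.of_nonneg_of_le (fun m => Real.rpow_nonneg (sv_nonneg _ _) t) hbound
    (((hA.2 hp).add (hB.2 hp)).hasSum.comp_div_two.summable.mul_left _)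

lemma schattenNorm_top (C : X →L[ℂ] Y) : schattenNorm ∞ C = ‖C‖ := if_pos rfl

lemma schattenNorm_one (C : X →L[ℂ] Y) : schattenNorm 1 C = ∑' n, sv C n := by
  simp [schattenNorm]

lemma summable_and_tsum_sv_mul_sv_le_of_top (A : X →L[ℂ] Y) {B : Z →L[ℂ] Y}
    (hB : MemSchatten 1 B) :
    Summable (fun k => sv A k * sv B k) ∧
      ∑' k, sv A k * sv B k ≤ schattenNorm ∞ A * schattenNorm 1 B := by
  have hB' : Summable (sv B) := by simpa using hB.2 ENNReal.one_ne_top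
  have hle (k : ℕ) : sv A k * sv B k ≤ ‖A‖ * sv B k :=
    mul_le_mul_of_nonneg_right (sv_le_norm A k) (sv_nonneg B k)
  have hs := Summable.of_nonneg_of_le (fun k => mul_nonneg (sv_nonneg A k) (sv_nonneg B k))
    hle (hB'.mul_left _)
  refine ⟨hs, ?_⟩
  rw [schattenNorm_top, schattenNorm_one, ← tsum_mul_left]
  exact hs.tsum_le_tsum hle (hB'.mul_left _)

lemma summable_and_tsum_sv_mul_sv_le {p q : ℝ≥0∞} [p.HolderConjugate q] {A : X →L[ℂ] Y}
    {B : Z →L[ℂ] Y} (hA : MemSchatten p A) (hB : MemSchatten q B) :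
    Summable (fun k => sv A k * sv B k) ∧
      ∑' k, sv A k * sv B k ≤ schattenNorm p A * schattenNorm q B := by
  by_cases hp : p = ∞
  · obtain rfl := hp
    obtain rfl := (ENNReal.HolderConjugate.eq_top_iff_eq_one ∞ q).mp rfl
    exact summable_and_tsum_sv_mul_sv_le_of_top A hB
  by_cases hq : q = ∞
  · obtain rfl := hq
    obtain rfl := (ENNReal.HolderConjugate.eq_top_iff_eq_one ∞ p).mp rfl
    simpa only [mul_comm] using summable_and_tsum_sv_mul_sv_le_of_top B hA
  have h := Real.summable_and_inner_le_Lp_mul_Lq_tsum_of_nonneg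
    (ENNReal.HolderConjugate.toReal_of_ne_top hp hq) (sv_nonneg A) (sv_nonneg B)
    (hA.2 hp) (hB.2 hq)
  simpa [schattenNorm, hp, hq] using h

lemma summable_and_tsum_sv_comp_le {A : Y →L[ℂ] Z} {B : X →L[ℂ] Y}
    (h : Summable fun k => sv A k * sv B k) :
    Summable (sv (A.comp B)) ∧ ∑' m, sv (A.comp B) m ≤ 2 * ∑' k, sv A k * sv B k := by
  have hmaj := h.hasSum.comp_div_two
  have hle (m : ℕ) : sv (A.comp B) m ≤ sv A (m / 2) * sv B (m / 2) :=
    (sv_antitone _ (by omega)).trans (sv_comp_le A B (m / 2) (m / 2))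
  have hs := Summable.of_nonneg_of_le (sv_nonneg _) hle hmaj.summable
  refine ⟨hs, ?_⟩
  rw [two_mul, ← hmaj.tsum_eq]
  exact hs.tsum_le_tsum hle hmaj.summable

end Schatten

section InnerProduct

variable {X : Type*} [NormedAddCommGroup X] [InnerProductSpace ℂ X]

lemma HilbertBasis.summable_and_tsum_norm_inner_mul_inner_le {ι : Type*}
    (b : HilbertBasis ι ℂ X) (u v : X) :
    Summable (fun i => ‖⟪u, b i⟫‖ * ‖⟪b i, v⟫‖) ∧
      ∑' i, ‖⟪u, b i⟫‖ * ‖⟪b i, v⟫‖ ≤ ‖u‖ * ‖v‖ := by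
  have h := lp.tsum_mul_le_mul_norm (p := 2) (q := 2)
    (by simpa using Real.HolderConjugate.two_two) (b.repr u) (b.repr v)
  simp only [HilbertBasis.repr_apply_apply, LinearIsometryEquiv.norm_map] at h
  simpa only [norm_inner_symm u] using h

lemma norm_tsum_inner_le {κ : Type*} {a c : κ → X} (hac : Summable fun k => ‖a k‖ * ‖c k‖) :
    ‖∑' k, ⟪a k, c k⟫‖ ≤ ∑' k, ‖a k‖ * ‖c k‖ := by
  have hinner : Summable fun k => ‖⟪a k, c k⟫‖ :=
    hac.of_nonneg_of_le (fun _ => norm_nonneg _) fun _ => norm_inner_le_norm _ _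
  exact (norm_tsum_le_tsum_norm hinner).trans
    (hinner.tsum_le_tsum (fun _ => norm_inner_le_norm _ _) hac)

end InnerProduct

section Trace

variable {X : Type*} [NormedAddCommGroup X] [InnerProductSpace ℂ X] [CompleteSpace X]

namespace IsTraceOf

variable {M N : X →L[ℂ] X} {z w : ℂ}

lemma unique (hz : IsTraceOf M z) (hw : IsTraceOf M w) : z = w := by
  obtain ⟨_, b, -⟩ := exists_hilbertBasis ℂ X
  exact (hz _ b).unique (hw _ b)

lemma add (hz : IsTraceOf M z) (hw : IsTraceOf N w) : IsTraceOf (M + N) (z + w) := fun ι b => by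
  simpa [inner_add_right] using (hz ι b).add (hw ι b)

lemma sub (hz : IsTraceOf M z) (hw : IsTraceOf N w) : IsTraceOf (M - N) (z - w) := fun ι b => by
  simpa [inner_sub_right] using (hz ι b).sub (hw ι b)

end IsTraceOf

/-- Both `∑ i ⟪b i, M (b i)⟫` and `∑ k ⟪a k, c k⟫` are iterated sums of the absolutely summable
family `⟪a k, b i⟫ ⟪b i, c k⟫`. -/
lemma isTraceOf_tsum_inner {κ : Type*} {M : X →L[ℂ] X} {a c : κ → X}
    (hac : Summable fun k => ‖a k‖ * ‖c k‖) (hM : ∀ x, HasSum (fun k => ⟪a k, x⟫ • c k) (M x)) :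
    IsTraceOf M (∑' k, ⟪a k, c k⟫) := by
  intro ι b
  set g : κ × ι → ℂ := fun p => ⟪a p.1, b p.2⟫ * ⟪b p.2, c p.1⟫
  have hg : Summable g := by
    refine .of_norm ((summable_prod_of_nonneg fun _ => norm_nonneg _).mpr ⟨fun k => ?_, ?_⟩)
    · simpa [g] using (b.summable_and_tsum_norm_inner_mul_inner_le (a k) (c k)).1
    · refine hac.of_nonneg_of_le (fun _ => tsum_nonneg fun _ => norm_nonneg _) fun k => ?_
      simpa [g] using (b.summable_and_tsum_norm_inner_mul_inner_le (a k) (c k)).2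
  have hrows : HasSum (fun k => ⟪a k, c k⟫) (∑' p, g p) :=
    hg.hasSum.prod_fiberwise fun k => b.hasSum_inner_mul_inner (a k) (c k)
  have hcols : HasSum (fun i => ⟪b i, M (b i)⟫) (∑' p, g p) := by
    refine ((Equiv.prodComm ι κ).hasSum_iff.mpr hg.hasSum).prod_fiberwise fun i => ?_
    simpa [g, inner_smul_right] using (hM (b i)).mapL (innerSL ℂ (b i))
  rwa [← hrows.tsum_eq] at hcols

lemma finiteRank_apply_eq_sum {F : X →L[ℂ] X} {ι : Type*} [Fintype ι]
    (b : OrthonormalBasis ι ℂ (LinearMap.range (F : X →ₗ[ℂ] X))) (x : X) :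
    F x = ∑ i, ⟪ContinuousLinearMap.adjoint F (b i), x⟫ • (b i : X) := by
  have h := congrArg Subtype.val (b.sum_repr' ⟨F x, LinearMap.mem_range_self _ x⟩)
  simp only [Submodule.coe_sum, Submodule.coe_smul, Submodule.coe_inner] at h
  simpa [ContinuousLinearMap.adjoint_inner_left] using h.symm

/-- Over an orthonormal basis `e` of its range, `G j = ∑ᵢ ⟪(G j)† eᵢ, ·⟫ eᵢ`; together these
form a nuclear representation of `M`. -/
lemma exists_isTraceOf_le_of_tendsto_sum {G : ℕ → X →L[ℂ] X} {M : X →L[ℂ] X} {R : ℕ → ℕ}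
    (hM : Tendsto (fun n => ∑ j ∈ Finset.range n, G j) atTop (nhds M))
    (hR : ∀ j, LinearMap.rank (G j : X →ₗ[ℂ] X) ≤ R j)
    (hs : Summable fun j => (R j : ℝ) * ‖G j‖) :
    ∃ z, IsTraceOf M z ∧ ‖z‖ ≤ ∑' j, (R j : ℝ) * ‖G j‖ := by
  have hfin (j : ℕ) : FiniteDimensional ℂ (LinearMap.range (G j : X →ₗ[ℂ] X)) :=
    Module.rank_lt_aleph0_iff.mp ((hR j).trans_lt Cardinal.natCast_lt_aleph0)
  let d (j : ℕ) := Module.finrank ℂ (LinearMap.range (G j : X →ₗ[ℂ] X))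
  let b (j : ℕ) : OrthonormalBasis (Fin (d j)) ℂ (LinearMap.range (G j : X →ₗ[ℂ] X)) :=
    haveI := hfin j; stdOrthonormalBasis ℂ _
  let a (k : Σ j, Fin (d j)) : X := ContinuousLinearMap.adjoint (G k.1) (b k.1 k.2)
  let c (k : Σ j, Fin (d j)) : X := b k.1 k.2
  have hac (k : Σ j, Fin (d j)) : ‖a k‖ * ‖c k‖ ≤ ‖G k.1‖ := by
    have hc : ‖c k‖ = 1 := (b k.1).orthonormal.1 k.2
    simpa [hc] using (ContinuousLinearMap.adjoint (G k.1)).le_opNorm (c k)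
  have hfiber (j : ℕ) : ∑' i, ‖a ⟨j, i⟩‖ * ‖c ⟨j, i⟩‖ ≤ R j * ‖G j‖ := by
    rw [tsum_fintype]
    calc ∑ i, ‖a ⟨j, i⟩‖ * ‖c ⟨j, i⟩‖ ≤ ∑ _i : Fin (d j), ‖G j‖ :=
          Finset.sum_le_sum fun i _ => hac ⟨j, i⟩
      _ ≤ R j * ‖G j‖ := by
          rw [Finset.sum_const, Finset.card_univ, Fintype.card_fin, nsmul_eq_mul]
          gcongr
          exact_mod_cast Module.finrank_le_of_rank_le (hR j)
  have hsum : Summable fun k => ‖a k‖ * ‖c k‖ :=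
    (summable_sigma_of_nonneg fun _ => by positivity).mpr ⟨fun _ => Summable.of_finite,
      hs.of_nonneg_of_le (fun _ => tsum_nonneg fun _ => by positivity) hfiber⟩
  have hrep (x : X) : HasSum (fun k => ⟪a k, x⟫ • c k) (M x) := by
    refine hasSum_sigma_of_tendsto_sum (g := fun j => G j x)
      ((hsum.mul_right ‖x‖).of_nonneg_of_le (fun _ => norm_nonneg _) fun k => ?_) (fun j => ?_) ?_
    · rw [norm_smul, mul_right_comm]
      gcongr
      exact norm_inner_le_norm _ _
    · simpa [a, c, ← finiteRank_apply_eq_sum] using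
        hasSum_fintype fun i => ⟪a ⟨j, i⟩, x⟫ • c ⟨j, i⟩
    · simpa [Function.comp_def] using
        ((ContinuousLinearMap.apply ℂ X x).continuous.tendsto M).comp hM
  refine ⟨_, isTraceOf_tsum_inner hsum hrep, (norm_tsum_inner_le hsum).trans ?_⟩
  rw [hsum.tsum_sigma' fun _ => Summable.of_finite]
  exact hsum.sigma.tsum_le_tsum hfiber hs

lemma exists_isTraceOf_le_of_tendsto_of_rank_le_two_pow {F : ℕ → X →L[ℂ] X} {M : X →L[ℂ] X}
    (hlim : Tendsto F atTop (nhds M))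
    (hrank : ∀ k, LinearMap.rank (F k : X →ₗ[ℂ] X) ≤ (2 ^ k : ℕ))
    (hs : Summable fun k => 2 ^ k * ‖M - F k‖) :
    ∃ z, IsTraceOf M z ∧ ‖z‖ ≤ ‖F 0‖ + 6 * ∑' k, 2 ^ k * ‖M - F k‖ := by
  let G : ℕ → X →L[ℂ] X := fun | 0 => F 0 | j + 1 => F (j + 1) - F j
  let R : ℕ → ℕ := fun | 0 => 1 | j + 1 => 3 * 2 ^ j
  have hpartial (n : ℕ) : ∑ j ∈ Finset.range (n + 1), G j = F n := by
    induction n with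
    | zero => simp [G]
    | succ n ih => rw [Finset.sum_range_succ, ih]; simp [G]
  have hR : ∀ j, LinearMap.rank (G j : X →ₗ[ℂ] X) ≤ R j
    | 0 => by simpa [G, R] using hrank 0
    | j + 1 => (rank_toLinearMap_sub_le _ _).trans <| by
        refine (add_le_add (hrank (j + 1)) (hrank j)).trans ?_
        show _ ≤ ((3 * 2 ^ j : ℕ) : Cardinal)
        norm_cast
        rw [pow_succ]
        omega
  have hsucc (j : ℕ) : (R (j + 1) : ℝ) * ‖G (j + 1)‖ ≤
      3 * (2 ^ j * ‖M - F j‖) + 3 * (2 ^ (j + 1) * ‖M - F (j + 1)‖) := by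
    have hnorm : ‖G (j + 1)‖ ≤ ‖M - F j‖ + ‖M - F (j + 1)‖ := by
      simpa [G] using norm_sub_le (M - F j) (M - F (j + 1))
    have h2 : (2 : ℝ) ^ j ≤ 2 ^ (j + 1) := pow_le_pow_right₀ one_le_two j.le_succ
    calc (R (j + 1) : ℝ) * ‖G (j + 1)‖ ≤ 3 * 2 ^ j * (‖M - F j‖ + ‖M - F (j + 1)‖) := by
          simp only [R]; push_cast; gcongr
      _ ≤ _ := by nlinarith [norm_nonneg (M - F (j + 1))]
  have hmaj : Summable fun j =>
      3 * (2 ^ j * ‖M - F j‖) + 3 * (2 ^ (j + 1) * ‖M - F (j + 1)‖) :=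
    (hs.mul_left 3).add (((summable_nat_add_iff 1).mpr hs).mul_left 3)
  have hRG : Summable fun j => (R j : ℝ) * ‖G j‖ :=
    (summable_nat_add_iff 1).mp (hmaj.of_nonneg_of_le (fun _ => by positivity) hsucc)
  obtain ⟨z, hz, hzle⟩ := exists_isTraceOf_le_of_tendsto_sum
    ((tendsto_add_atTop_iff_nat 1).mp (by simpa only [hpartial] using hlim)) hR hRG
  refine ⟨z, hz, hzle.trans ?_⟩
  have htail := ((summable_nat_add_iff 1).mpr hRG).tsum_le_tsum hsucc hmaj
  rw [(hs.mul_left 3).tsum_add (((summable_nat_add_iff 1).mpr hs).mul_left 3), tsum_mul_left,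
    tsum_mul_left] at htail
  rw [hRG.tsum_eq_zero_add]
  simp only [R, G, Nat.cast_one, one_mul] at htail ⊢
  linarith [hs.tsum_eq_zero_add, show (0 : ℝ) ≤ 2 ^ 0 * ‖M - F 0‖ by positivity]

lemma exists_isTraceOf_le_of_summable_sv_add {M : X →L[ℂ] X} (hM : Summable (sv M)) {ε : ℝ}
    (hε : 0 < ε) : ∃ z, IsTraceOf M z ∧ ‖z‖ ≤ 20 * ∑' n, sv M n + 13 * ε := by
  choose F hFrank hF using fun k : ℕ =>
    exists_norm_sub_lt_sv_add M (2 ^ k) (show 0 < ε / 4 ^ k by positivity)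
  set S := ∑' n, sv M n
  have hS (n : ℕ) : sv M n ≤ S := hM.le_tsum n fun k _ => sv_nonneg M k
  have hlim : Tendsto F atTop (nhds M) := by
    rw [tendsto_iff_norm_sub_tendsto_zero]
    have hsv : Tendsto (fun k => sv M (2 ^ k)) atTop (nhds 0) :=
      hM.tendsto_atTop_zero.comp (tendsto_pow_atTop_atTop_of_one_lt one_lt_two)
    have hgeom : Tendsto (fun k : ℕ => ε / 4 ^ k) atTop (nhds 0) :=
      tendsto_const_nhds.div_atTop (tendsto_pow_atTop_atTop_of_one_lt (by norm_num))
    refine squeeze_zero (fun _ => norm_nonneg _) (fun k => ?_) (by simpa using hsv.add hgeom)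
    exact (norm_sub_rev (F k) M).le.trans (hF k).le
  have hweight (k : ℕ) : 2 ^ k * ‖M - F k‖ ≤ 2 ^ k * sv M (2 ^ k) + ε * (1 / 2) ^ k := by
    have h : (2 : ℝ) ^ k * (ε / 4 ^ k) = ε * (1 / 2) ^ k := by
      rw [show (4 : ℝ) ^ k = 2 ^ k * 2 ^ k by rw [← mul_pow]; norm_num, one_div_pow]
      field_simp
    calc 2 ^ k * ‖M - F k‖ ≤ 2 ^ k * (sv M (2 ^ k) + ε / 4 ^ k) := by gcongr; exact (hF k).le
      _ = _ := by rw [mul_add, h]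
  have hcond := summable_and_tsum_condensed_le (sv_nonneg M) (sv_antitone M) hM
  have hmaj := hcond.1.add (summable_geometric_two.mul_left ε)
  have hs : Summable fun k => 2 ^ k * ‖M - F k‖ :=
    hmaj.of_nonneg_of_le (fun _ => by positivity) hweight
  obtain ⟨z, hz, hzle⟩ := exists_isTraceOf_le_of_tendsto_of_rank_le_two_pow hlim hFrank hs
  refine ⟨z, hz, hzle.trans ?_⟩
  have hsum := hs.tsum_le_tsum hweight hmaj
  rw [hcond.1.tsum_add (summable_geometric_two.mul_left ε), tsum_mul_left, tsum_geometric_two]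
    at hsum
  have hF0 : ‖F 0‖ ≤ ‖M‖ + ‖M - F 0‖ := by simpa using norm_sub_le M (M - F 0)
  have := hF 0
  simp only [pow_zero, div_one, ← sv_zero M] at this hF0
  linarith [hcond.2, hS 0, hS 1]

lemma exists_isTraceOf_le_of_summable_sv {M : X →L[ℂ] X} (hM : Summable (sv M)) :
    ∃ z, IsTraceOf M z ∧ ‖z‖ ≤ 20 * ∑' n, sv M n := by
  obtain ⟨z, hz, -⟩ := exists_isTraceOf_le_of_summable_sv_add hM one_pos
  refine ⟨z, hz, le_of_forall_pos_le_add fun ε hε => ?_⟩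
  obtain ⟨w, hw, hwle⟩ := exists_isTraceOf_le_of_summable_sv_add hM (by positivity : 0 < ε / 13)
  rw [hz.unique hw]
  linarith

lemma norm_le_one_of_mem_unitary {U : X →L[ℂ] X} (hU : U ∈ unitary (X →L[ℂ] X)) : ‖U‖ ≤ 1 :=
  ContinuousLinearMap.opNorm_le_bound U zero_le_one fun x => by
    rw [ContinuousLinearMap.norm_map_of_mem_unitary hU, one_mul]

lemma sv_unitary_conj_le (B : X →L[ℂ] X) {U : X →L[ℂ] X} (hU : U ∈ unitary (X →L[ℂ] X))
    (n : ℕ) : sv (star U * (B * U)) n ≤ sv B n := by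
  have hU₁ := norm_le_one_of_mem_unitary hU
  have hU₂ := norm_le_one_of_mem_unitary (Unitary.star_mem hU)
  calc sv (star U * (B * U)) n ≤ ‖star U‖ * (sv B n * ‖U‖) :=
        (sv_comp_le_norm_mul _ _ n).trans (by gcongr; exact sv_comp_le_mul_norm B U n)
    _ ≤ 1 * (sv B n * 1) := by have := sv_nonneg B n; gcongr
    _ = sv B n := by ring

lemma exists_isTraceOf_mul_unitary_conj_le {p q : ℝ≥0∞} [p.HolderConjugate q] {A B : X →L[ℂ] X}
    (hA : MemSchatten p A) (hB : MemSchatten q B) {U : X →L[ℂ] X}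
    (hU : U ∈ unitary (X →L[ℂ] X)) :
    ∃ z, IsTraceOf (A * (star U * (B * U))) z ∧
      ‖z‖ ≤ 40 * (schattenNorm p A * schattenNorm q B) := by
  obtain ⟨hAB, hABle⟩ := summable_and_tsum_sv_mul_sv_le hA hB
  have hle (k : ℕ) : sv A k * sv (star U * (B * U)) k ≤ sv A k * sv B k :=
    mul_le_mul_of_nonneg_left (sv_unitary_conj_le B hU k) (sv_nonneg A k)
  have hs := hAB.of_nonneg_of_le (fun k => mul_nonneg (sv_nonneg _ k) (sv_nonneg _ k)) hle
  obtain ⟨hprod, hprodle⟩ := summable_and_tsum_sv_comp_le hs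
  obtain ⟨z, hz, hzle⟩ := exists_isTraceOf_le_of_summable_sv hprod
  refine ⟨z, hz, hzle.trans ?_⟩
  linarith [hs.tsum_le_tsum hle hAB]

lemma exists_isTraceOf_mul_unitary_conj_dist_le {p q : ℝ≥0∞} [p.HolderConjugate q]
    {A A' B B' : X →L[ℂ] X} (hA : MemSchatten p A) (hA' : MemSchatten p A')
    (hB : MemSchatten q B) (hB' : MemSchatten q B') {U : X →L[ℂ] X}
    (hU : U ∈ unitary (X →L[ℂ] X)) :
    ∃ w w', IsTraceOf (A * (star U * (B * U))) w ∧ IsTraceOf (A' * (star U * (B' * U))) w' ∧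
      dist w' w ≤ 40 * (schattenNorm p (A - A') * schattenNorm q B +
        schattenNorm p A * schattenNorm q (B - B') +
        schattenNorm p (A - A') * schattenNorm q (B - B')) := by
  obtain ⟨w, hw, -⟩ := exists_isTraceOf_mul_unitary_conj_le hA hB hU
  obtain ⟨z₁, hz₁, hz₁le⟩ := exists_isTraceOf_mul_unitary_conj_le (hA.sub hA') hB hU
  obtain ⟨z₂, hz₂, hz₂le⟩ := exists_isTraceOf_mul_unitary_conj_le hA (hB.sub hB') hU
  obtain ⟨z₃, hz₃, hz₃le⟩ := exists_isTraceOf_mul_unitary_conj_le (hA.sub hA') (hB.sub hB') hU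
  have hdecomp : A' * (star U * (B' * U)) = A * (star U * (B * U)) -
      (A - A') * (star U * (B * U)) - A * (star U * ((B - B') * U)) +
      (A - A') * (star U * ((B - B') * U)) := by
    noncomm_ring
  refine ⟨w, w - z₁ - z₂ + z₃, hw, hdecomp ▸ ((hw.sub hz₁).sub hz₂).add hz₃, ?_⟩
  rw [dist_eq_norm, show w - z₁ - z₂ + z₃ - w = -z₁ - z₂ + z₃ by ring]
  have := norm_add₃_le (a := -z₁) (b := -z₂) (c := z₃)
  rw [norm_neg, norm_neg, ← sub_eq_add_neg] at this
  linarith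

def cNumericalRange (C T : X →L[ℂ] X) : Set ℂ :=
  {z | ∃ U ∈ unitary (X →L[ℂ] X), IsTraceOf (C * (star U * (T * U))) z}

lemma hausdorffDist_cNumericalRange_le {C C' T T' : X →L[ℂ] X} {r : ℝ}
    (h : ∀ U ∈ unitary (X →L[ℂ] X), ∃ w w', IsTraceOf (C * (star U * (T * U))) w ∧
      IsTraceOf (C' * (star U * (T' * U))) w' ∧ dist w' w ≤ r) :
    Metric.hausdorffDist (cNumericalRange C' T') (cNumericalRange C T) ≤ r := by
  obtain ⟨w, w', -, -, h₁⟩ := h 1 (one_mem _)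
  refine Metric.hausdorffDist_le_of_mem_dist (dist_nonneg.trans h₁) ?_ ?_
  · rintro x ⟨U, hU, hx⟩
    obtain ⟨w, w', hw, hw', hdist⟩ := h U hU
    exact ⟨w, ⟨U, hU, hw⟩, hx.unique hw' ▸ hdist⟩
  · rintro x ⟨U, hU, hx⟩
    obtain ⟨w, w', hw, hw', hdist⟩ := h U hU
    exact ⟨w', ⟨U, hU, hw'⟩, hx.unique hw ▸ dist_comm w' w ▸ hdist⟩

end Trace

theorem stmt12_general {X : Type u}
    [NormedAddCommGroup X] [InnerProductSpace ℂ X] [CompleteSpace X]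
    (p q : ℝ≥0∞) (hpq : 1 / p + 1 / q = 1)
    (C T : X →L[ℂ] X) (Cs Ts : ℕ → X →L[ℂ] X)
    (hC : MemSchatten p C) (hT : MemSchatten q T)
    (hCs : ∀ n, MemSchatten p (Cs n)) (hTs : ∀ n, MemSchatten q (Ts n))
    (hCconv : Filter.Tendsto (fun n => schattenNorm p (C - Cs n)) Filter.atTop (nhds 0))
    (hTconv : Filter.Tendsto (fun n => schattenNorm q (T - Ts n)) Filter.atTop (nhds 0)) :
    Filter.Tendsto (fun n => Metric.hausdorffDist
        (closure {z : ℂ | ∃ U ∈ unitary (X →L[ℂ] X),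
            IsTraceOf ((Cs n).comp ((ContinuousLinearMap.adjoint U).comp ((Ts n).comp U))) z})
        (closure {z : ℂ | ∃ U ∈ unitary (X →L[ℂ] X),
            IsTraceOf (C.comp ((ContinuousLinearMap.adjoint U).comp (T.comp U))) z}))
      Filter.atTop (nhds 0) := by
  have : p.HolderConjugate q :=
    ENNReal.holderConjugate_iff.mpr (by simpa only [one_div] using hpq)
  change Tendsto (fun n => Metric.hausdorffDist (closure (cNumericalRange (Cs n) (Ts n)))
    (closure (cNumericalRange C T))) atTop (nhds 0)
  set r : ℕ → ℝ := fun n => 40 * (schattenNorm p (C - Cs n) * schattenNorm q T +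
    schattenNorm p C * schattenNorm q (T - Ts n) +
    schattenNorm p (C - Cs n) * schattenNorm q (T - Ts n))
  have hr : Tendsto r atTop (nhds 0) := by
    simpa [r] using (((hCconv.mul_const _).add (hTconv.const_mul _)).add
      (hCconv.mul hTconv)).const_mul 40
  refine squeeze_zero (fun _ => Metric.hausdorffDist_nonneg) (fun n => ?_) hr
  rw [Metric.hausdorffDist_closure]
  exact hausdorffDist_cNumericalRange_le fun U hU =>
    exists_isTraceOf_mul_unitary_conj_dist_le hC (hCs n) hT (hTs n) hU

/-- Hausdorff-metric continuity of the `C`-numerical range: if `C_n → C` in the Schatten-`p`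
norm and `T_n → T` in the Schatten-`q` norm, then `closure W_{C_n}(T_n) → closure W_C(T)`
in the Hausdorff metric. -/
theorem stmt12 {X : Type u}
    [NormedAddCommGroup X] [InnerProductSpace ℂ X] [CompleteSpace X]
    (hX : ¬ FiniteDimensional ℂ X)
    (p q : ℝ≥0∞) (hp : 1 ≤ p) (hq : 1 ≤ q) (hpq : 1 / p + 1 / q = 1)
    (C T : X →L[ℂ] X) (Cs Ts : ℕ → X →L[ℂ] X)
    (hC : MemSchatten p C) (hT : MemSchatten q T)
    (hCs : ∀ n, MemSchatten p (Cs n)) (hTs : ∀ n, MemSchatten q (Ts n))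
    (hCconv : Filter.Tendsto (fun n => schattenNorm p (C - Cs n)) Filter.atTop (nhds 0))
    (hTconv : Filter.Tendsto (fun n => schattenNorm q (T - Ts n)) Filter.atTop (nhds 0)) :
    Filter.Tendsto (fun n => Metric.hausdorffDist
        (closure {z : ℂ | ∃ U ∈ unitary (X →L[ℂ] X),
            IsTraceOf ((Cs n).comp ((ContinuousLinearMap.adjoint U).comp ((Ts n).comp U))) z})
        (closure {z : ℂ | ∃ U ∈ unitary (X →L[ℂ] X),
            IsTraceOf (C.comp ((ContinuousLinearMap.adjoint U).comp (T.comp U))) z}))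
      Filter.atTop (nhds 0) :=
  stmt12_general p q hpq C T Cs Ts hC hT hCs hTs hCconv hTconv

end
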